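/- Suppose the probability generating function 𝒫 of the ℕ-valued random variable X satisfies, for all real u, v with 0 ≤ u ≤ 1 and 0 ≤ v ≤ 1, the functional equation 𝒫((1-p)u + pv)·(p𝒫(u) + (1-p)𝒫(v)) = 𝒫((1-p)u + p)·(p𝒫(u) + (1-p)) · 𝒫((1-p) + pv)·(p + (1-p)𝒫(v)). Then there exists a constant C such that for all u ∈ [0,1], p·𝒫'((1-p)u)/𝒫((1-p)u) + (1-p)·𝒫'(0)/(p·𝒫(u) + (1-p)·𝒫(0)) = C, where 𝒫' denotes the derivative of 𝒫. -/

import Mathlib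

/-!
For fixed `u`, both sides of the functional equation are functions of `v` that are
differentiable at `v = 0` and agree on `[0, 1]`, so their derivatives at `0` agree. Dividing by
the common positive value at `v = 0` equates logarithmic derivatives. On the left this is the
expression of the statement; on the right, `u` only enters through a constant factor, which
does not contribute, so the value is independent of `u`.
Positivity of `𝒫 0` follows from the equation at `u = v = 0`, and differentiability of `𝒫`
on `[0, 1)` from differentiation under the integral sign.
-/

open MeasureTheory Set Filter

theorem natCast_mul_pow_pred_le_inv_one_sub {r : ℝ} (hr0 : 0 ≤ r) (hr1 : r < 1) (k : ℕ) :
    k * r ^ (k - 1) ≤ (1 - r)⁻¹ :=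
  calc (k : ℝ) * r ^ (k - 1) = ∑ i ∈ Finset.range k, r ^ (k - 1) := by simp
    _ ≤ ∑ i ∈ Finset.range k, r ^ i :=
      Finset.sum_le_sum fun i hi => pow_le_pow_of_le_one hr0 hr1.le (by grind)
    _ ≤ (1 - r)⁻¹ := by
      simpa only [← Finset.range_eq_Ico, pow_zero, one_div]
        using geom_sum_Ico_le_of_lt_one (m := 0) (n := k) hr0 hr1

section GeneratingFunction

variable {Ω : Type*} [MeasurableSpace Ω] {μ : Measure Ω} {X : Ω → ℕ}

theorem integrable_pow_of_abs_le_one [IsFiniteMeasure μ] (hX : Measurable X) {t : ℝ}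
    (ht : |t| ≤ 1) : Integrable (fun ω => t ^ X ω) μ :=
  (integrable_const (1 : ℝ)).mono' (measurable_const.pow hX).aestronglyMeasurable <|
    Eventually.of_forall fun ω => by
      simpa [abs_pow] using pow_le_one₀ (abs_nonneg t) ht

theorem integral_pow_pos [IsFiniteMeasure μ] [NeZero μ] (hX : Measurable X) {t : ℝ}
    (ht0 : 0 < t) (ht1 : t ≤ 1) : 0 < ∫ ω, t ^ X ω ∂μ := by
  rw [integral_pos_iff_support_of_nonneg (fun ω => (pow_pos ht0 _).le)
    (integrable_pow_of_abs_le_one hX (abs_le.2 ⟨by linarith, ht1⟩))]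
  have : Function.support (fun ω => t ^ X ω) = univ :=
    eq_univ_of_forall fun ω => (pow_pos ht0 _).ne'
  simp [this, NeZero.ne μ]

theorem hasDerivAt_integral_pow [IsFiniteMeasure μ] (hX : Measurable X) {t : ℝ} (ht : |t| < 1) :
    HasDerivAt (fun x => ∫ ω, x ^ X ω ∂μ) (∫ ω, X ω * t ^ (X ω - 1) ∂μ) t := by
  set r := (|t| + 1) / 2 with hr
  have hr0 : 0 ≤ r := by positivity
  have hr1 : r < 1 := by linarith
  have htr : t ∈ Ioo (-r) r := abs_lt.1 (by linarith)
  have hF'_meas : Measurable fun ω => (X ω : ℝ) * t ^ (X ω - 1) := by fun_prop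
  refine (hasDerivAt_integral_of_dominated_loc_of_deriv_le
    (F' := fun x ω => X ω * x ^ (X ω - 1)) (bound := fun _ => (1 - r)⁻¹)
    (Ioo_mem_nhds htr.1 htr.2)
    (Eventually.of_forall fun x => (measurable_const.pow hX).aestronglyMeasurable)
    (integrable_pow_of_abs_le_one hX (by linarith))
    hF'_meas.aestronglyMeasurable ?_ (integrable_const _) ?_).2
  · refine Eventually.of_forall fun ω x hx => ?_
    have hxr : |x| ≤ r := (abs_lt.2 hx).le
    calc ‖(X ω : ℝ) * x ^ (X ω - 1)‖ = X ω * |x| ^ (X ω - 1) := by simp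
      _ ≤ X ω * r ^ (X ω - 1) := by gcongr
      _ ≤ (1 - r)⁻¹ := natCast_mul_pow_pred_le_inv_one_sub hr0 hr1 _
  · exact Eventually.of_forall fun ω x _ => hasDerivAt_pow (X ω) x

end GeneratingFunction

def PGFFunctionalEquation (p : ℝ) (P : ℝ → ℝ) : Prop :=
  ∀ u v : ℝ, 0 ≤ u → u ≤ 1 → 0 ≤ v → v ≤ 1 →
    P ((1 - p) * u + p * v) * (p * P u + (1 - p) * P v) =
      P ((1 - p) * u + p) * (p * P u + (1 - p)) *
        (P ((1 - p) + p * v) * (p + (1 - p) * P v))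

theorem HasDerivAt.unique_of_eqOn_Icc {E : Type*} [NormedAddCommGroup E] [NormedSpace ℝ E]
    {f g : ℝ → E} {f' g' : E} {a b : ℝ} (hab : a < b) (hfg : EqOn f g (Icc a b))
    (hf : HasDerivAt f f' a) (hg : HasDerivAt g g' a) : f' = g' :=
  (uniqueDiffOn_Icc hab a (left_mem_Icc.2 hab.le)).eq_deriv _ hf.hasDerivWithinAt
    (hg.hasDerivWithinAt.congr hfg (hfg (left_mem_Icc.2 hab.le)))

/-- The derivative is written as value times logarithmic derivative. -/
theorem hasDerivAt_comp_affine_mul_affine_comp_zero {P : ℝ → ℝ} {a b c p : ℝ}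
    (ha : P a ≠ 0) (hb : b + c * P 0 ≠ 0)
    (hPa : DifferentiableAt ℝ P a) (hP0 : DifferentiableAt ℝ P 0) :
    HasDerivAt (fun v => P (a + p * v) * (b + c * P v))
      (P a * (b + c * P 0) * (p * deriv P a / P a + c * deriv P 0 / (b + c * P 0))) 0 := by
  have hline : HasDerivAt (fun v => a + p * v) p 0 := by
    simpa using ((hasDerivAt_id (0 : ℝ)).const_mul p).const_add a
  have h1 : HasDerivAt (fun v => P (a + p * v)) (deriv P a * p) 0 :=
    (by simpa using hPa.hasDerivAt : HasDerivAt P (deriv P a) (a + p * 0)).comp 0 hline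
  refine (h1.mul ((hP0.hasDerivAt.const_mul c).const_add b)).congr_deriv ?_
  simp only [mul_zero, add_zero]
  field_simp

namespace PGFFunctionalEquation

variable {p : ℝ} {P : ℝ → ℝ}

theorem pos_of_mem_Icc (hfe : PGFFunctionalEquation p P) (hp0 : 0 < p) (hp1 : p < 1)
    (h0 : 0 ≤ P 0) (hpos : ∀ t ∈ Ioc (0 : ℝ) 1, 0 < P t) :
    ∀ t ∈ Icc (0 : ℝ) 1, 0 < P t := by
  have hP0 : P 0 ≠ 0 := by
    intro h
    have h00 := hfe 0 0 le_rfl zero_le_one le_rfl zero_le_one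
    simp only [mul_zero, add_zero, zero_add, h] at h00
    have := mul_pos (hpos p ⟨hp0, hp1.le⟩) (hpos (1 - p) ⟨by linarith, by linarith⟩)
    nlinarith [mul_pos hp0 (sub_pos.2 hp1)]
  rintro t ⟨ht0, ht1⟩
  rcases ht0.eq_or_lt with rfl | ht0
  · exact h0.lt_of_ne' hP0
  · exact hpos t ⟨ht0, ht1⟩

theorem logDeriv_eq (hfe : PGFFunctionalEquation p P) (hp0 : 0 < p) (hp1 : p < 1)
    (hpos : ∀ t ∈ Icc (0 : ℝ) 1, 0 < P t)
    (hdiff : ∀ t ∈ Ico (0 : ℝ) 1, DifferentiableAt ℝ P t)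
    {u : ℝ} (hu0 : 0 ≤ u) (hu1 : u ≤ 1) :
    p * deriv P ((1 - p) * u) / P ((1 - p) * u) + (1 - p) * deriv P 0 / (p * P u + (1 - p) * P 0) =
      p * deriv P (1 - p) / P (1 - p) + (1 - p) * deriv P 0 / (p + (1 - p) * P 0) := by
  have hq : 0 < 1 - p := sub_pos.2 hp1
  have hPu := hpos u ⟨hu0, hu1⟩
  have hP0 := hpos 0 ⟨le_rfl, zero_le_one⟩
  have hPa := hpos ((1 - p) * u) ⟨by positivity, by nlinarith⟩
  have hPq := hpos (1 - p) ⟨hq.le, by linarith⟩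
  have hK := mul_pos (hpos ((1 - p) * u + p) ⟨by positivity, by nlinarith⟩)
    (by positivity : 0 < p * P u + (1 - p))
  have hdiff' : ∀ t, 0 ≤ t → t ≤ 1 - p → DifferentiableAt ℝ P t :=
    fun t ht0 ht1 => hdiff t ⟨ht0, by linarith⟩
  have hL := hasDerivAt_comp_affine_mul_affine_comp_zero (p := p) hPa.ne'
    (by positivity : 0 < p * P u + (1 - p) * P 0).ne' (hdiff' _ (by positivity) (by nlinarith))
    (hdiff' 0 le_rfl hq.le)
  have hR := (hasDerivAt_comp_affine_mul_affine_comp_zero (p := p) hPq.ne'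
    (by positivity : 0 < p + (1 - p) * P 0).ne' (hdiff' _ hq.le le_rfl)
    (hdiff' 0 le_rfl hq.le)).const_mul (P ((1 - p) * u + p) * (p * P u + (1 - p)))
  have hderiv := hL.unique_of_eqOn_Icc zero_lt_one (fun v hv => hfe u v hu0 hu1 hv.1 hv.2) hR
  have hvalue := hfe u 0 hu0 hu1 le_rfl zero_le_one
  simp only [mul_zero, add_zero] at hvalue
  rw [hvalue, mul_assoc] at hderiv
  exact mul_left_cancel₀ (by positivity) (mul_left_cancel₀ (by positivity) hderiv)

end PGFFunctionalEquation

/-- If the probability generating function `𝒫` of an `ℕ`-valued random variable `X`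
satisfies the independence functional equation on `[0,1] × [0,1]`, then there is a
constant `C` with
`p·𝒫'((1-p)u)/𝒫((1-p)u) + (1-p)·𝒫'(0)/(p·𝒫(u) + (1-p)·𝒫(0)) = C` for all `u ∈ [0,1]`. -/
theorem pgf_functional_equation_implies_derivative_identity
    {Ω : Type*} [MeasurableSpace Ω] (μ : Measure Ω) [IsProbabilityMeasure μ]
    (p : ℝ) (hp0 : 0 < p) (hp1 : p < 1)
    (X : Ω → ℕ) (hXm : Measurable X)
    (P : ℝ → ℝ) (hP : ∀ t : ℝ, P t = ∫ ω, t ^ X ω ∂μ)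
    (hfe : ∀ u v : ℝ, 0 ≤ u → u ≤ 1 → 0 ≤ v → v ≤ 1 →
      P ((1 - p) * u + p * v) * (p * P u + (1 - p) * P v) =
        P ((1 - p) * u + p) * (p * P u + (1 - p)) *
          (P ((1 - p) + p * v) * (p + (1 - p) * P v))) :
    ∃ C : ℝ, ∀ u : ℝ, 0 ≤ u → u ≤ 1 →
      p * deriv P ((1 - p) * u) / P ((1 - p) * u) +
        (1 - p) * deriv P 0 / (p * P u + (1 - p) * P 0) = C := by
  have hpos : ∀ t ∈ Icc (0 : ℝ) 1, 0 < P t := by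
    refine PGFFunctionalEquation.pos_of_mem_Icc hfe hp0 hp1 ?_ fun t ht => ?_
    · exact hP 0 ▸ integral_nonneg fun ω => pow_nonneg le_rfl _
    · exact hP t ▸ integral_pow_pos hXm ht.1 ht.2
  have hdiff : ∀ t ∈ Ico (0 : ℝ) 1, DifferentiableAt ℝ P t := fun t ht => by
    rw [funext hP]
    exact (hasDerivAt_integral_pow hXm (abs_lt.2 ⟨by linarith [ht.1], ht.2⟩)).differentiableAt
  exact ⟨_, fun u hu0 hu1 => PGFFunctionalEquation.logDeriv_eq hfe hp0 hp1 hpos hdiff hu0 hu1⟩
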